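/- arXiv:2306.02189 — 2 statements merged into one kernel-verified Lean document; each statement's English description precedes it below -/
import Mathlib

section
/- Let a_X, a_P, b_in, b_out, g_0, g_1, g_2, t be positive reals satisfying: a_X ≤ min(a_P + b_in, a_P + b_out); a_P ≤ min(a_X + b_in, a_X + b_out); b_in ≤ min(a_X + a_P, b_out + t, g_i + b_out for i ∈ {0,1,2}); b_out ≤ min(a_X + a_P, b_in + t, g_i + b_in for i ∈ {0,1,2}); g_i ≤ min(2a_X, g_j + g_k, 2b_in, 2b_out) for all i,j,k ∈ {0,1,2}; and t ≤ min(2a_P, 2b_in, 2b_out). Let ([n], S) be a set system of 3-element sets with |S| = m, and define the weighted complete graph on points {r} ∪ {t_1,...,t_n} ∪ {s_1,...,s_m} with Δ(r, s_j) = a_X, Δ(r, t_i) = a_P, Δ(t_i, s_j) = b_in if i ∈ S_j and b_out otherwise, Δ(s_j, s_{j'}) = g_c when |S_j ∩ S_{j'}| = c, and Δ(t_i, t_{i'}) = t for i ≠ i'. Then Δ (extended by Δ(x,x) = 0 and symmetry) is a metric on this finite point set. -/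
/-- The metric-compatibility inequalities on the tuple
`(aX, aP, bin, bout, g0, g1, g2, τ)` imply that the weight function `Δ` of the
set system space — on the point set consisting of a root `r = none`, universe
elements `t_i = some (inl i)`, and facilities `s_j = some (inr j)` — extended
by `Δ x x = 0` and symmetry, is a metric. -/
theorem stmt12 (n m : ℕ) (Sets : Fin m → Finset (Fin n))
    (hcard : ∀ j, (Sets j).card = 3) (hinj : Function.Injective Sets)
    (aX aP bin bout g0 g1 g2 τ : ℝ)
    (haX : 0 < aX) (haP : 0 < aP) (hbin : 0 < bin) (hbout : 0 < bout)
    (hg0 : 0 < g0) (hg1 : 0 < g1) (hg2 : 0 < g2) (hτ : 0 < τ)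
    (h1 : aX ≤ min (aP + bin) (aP + bout))
    (h2 : aP ≤ min (aX + bin) (aX + bout))
    (h3 : bin ≤ aX + aP ∧ bin ≤ bout + τ ∧ bin ≤ g0 + bout ∧ bin ≤ g1 + bout ∧ bin ≤ g2 + bout)
    (h4 : bout ≤ aX + aP ∧ bout ≤ bin + τ ∧ bout ≤ g0 + bin ∧ bout ≤ g1 + bin ∧ bout ≤ g2 + bin)
    (h5 : ∀ gi ∈ ({g0, g1, g2} : Set ℝ), ∀ gj ∈ ({g0, g1, g2} : Set ℝ),
      ∀ gk ∈ ({g0, g1, g2} : Set ℝ),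
        gi ≤ 2 * aX ∧ gi ≤ gj + gk ∧ gi ≤ 2 * bin ∧ gi ≤ 2 * bout)
    (h6 : τ ≤ 2 * aP ∧ τ ≤ 2 * bin ∧ τ ≤ 2 * bout)
    (Δ : Option (Fin n ⊕ Fin m) → Option (Fin n ⊕ Fin m) → ℝ)
    (hself : ∀ x, Δ x x = 0)
    (hsymm : ∀ x y, Δ x y = Δ y x)
    (hrs : ∀ j, Δ none (some (Sum.inr j)) = aX)
    (hrt : ∀ i, Δ none (some (Sum.inl i)) = aP)
    (hts : ∀ i j, Δ (some (Sum.inl i)) (some (Sum.inr j)) =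
      if i ∈ Sets j then bin else bout)
    (hss : ∀ j j', j ≠ j' → Δ (some (Sum.inr j)) (some (Sum.inr j')) =
      if (Sets j ∩ Sets j').card = 0 then g0
      else if (Sets j ∩ Sets j').card = 1 then g1 else g2)
    (htt : ∀ i i', i ≠ i' → Δ (some (Sum.inl i)) (some (Sum.inl i')) = τ) :
    (∀ x y, 0 ≤ Δ x y) ∧
    (∀ x y, Δ x y = 0 ↔ x = y) ∧
    (∀ x y, Δ x y = Δ y x) ∧
    (∀ x y z, Δ x z ≤ Δ x y + Δ y z) := by
  have hsr : ∀ j, Δ (some (Sum.inr j)) none = aX := fun j => (hsymm _ _).trans (hrs j)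
  have htr : ∀ i, Δ (some (Sum.inl i)) none = aP := fun i => (hsymm _ _).trans (hrt i)
  have hst : ∀ i j, Δ (some (Sum.inr j)) (some (Sum.inl i)) = if i ∈ Sets j then bin else bout :=
    fun i j => (hsymm _ _).trans (hts i j)
  obtain ⟨h1a, h1b⟩ := le_min_iff.mp h1
  obtain ⟨h2a, h2b⟩ := le_min_iff.mp h2
  obtain ⟨h3a, h3b, h3c, h3d, h3e⟩ := h3
  obtain ⟨h4a, h4b, h4c, h4d, h4e⟩ := h4
  have mem0 : g0 ∈ ({g0, g1, g2} : Set ℝ) := by simp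
  have mem1 : g1 ∈ ({g0, g1, g2} : Set ℝ) := by simp
  have mem2 : g2 ∈ ({g0, g1, g2} : Set ℝ) := by simp
  obtain ⟨hg0a, -, hg0b, hg0c⟩ := h5 g0 mem0 g0 mem0 g0 mem0
  obtain ⟨hg1a, -, hg1b, hg1c⟩ := h5 g1 mem1 g1 mem1 g1 mem1
  obtain ⟨hg2a, -, hg2b, hg2c⟩ := h5 g2 mem2 g2 mem2 g2 mem2
  obtain ⟨h6a, h6b, h6c⟩ := h6
  have hpos : ∀ x y, x ≠ y → 0 < Δ x y := by
    rintro (_ | (x | x)) (_ | (y | y)) hxy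
    · exact absurd rfl hxy
    · rw [hrt]; exact haP
    · rw [hrs]; exact haX
    · rw [htr]; exact haP
    · rw [htt x y (fun h => hxy (by rw [h]))]; exact hτ
    · rw [hts]; split_ifs <;> [exact hbin; exact hbout]
    · rw [hsr]; exact haX
    · rw [hst]; split_ifs <;> [exact hbin; exact hbout]
    · rw [hss x y (fun h => hxy (by rw [h]))]; split_ifs <;> [exact hg0; exact hg1; exact hg2]
  have tri : ∀ x y z, Δ x z ≤ Δ x y + Δ y z := by
    intro x y z
    by_cases hxy : x = y
    · subst hxy; rw [hself, zero_add]
    by_cases hyz : y = z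
    · subst hyz; rw [hself, add_zero]
    by_cases hxz : x = z
    · subst hxz; rw [hself]; linarith [hpos x y hxy, hsymm x y, hpos y x (Ne.symm hxy)]
    rcases x with _ | (i | j)
    · rcases y with _ | (i' | j')
      · exact absurd rfl hxy
      · rcases z with _ | (i'' | j'')
        · exact absurd rfl hxz
        · rw [hrt, hrt, htt i' i'' (fun h => hyz (by rw [h]))]; linarith
        · rw [hrs, hrt, hts]; split_ifs <;> linarith
      · rcases z with _ | (i'' | j'')
        · exact absurd rfl hxz
        · rw [hrt, hrs, hst]; split_ifs <;> linarith
        · rw [hrs, hrs, hss j' j'' (fun h => hyz (by rw [h]))]; split_ifs <;> linarith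
    · rcases y with _ | (i' | j')
      · rcases z with _ | (i'' | j'')
        · exact absurd rfl hyz
        · rw [htt i i'' (fun h => hxz (by rw [h])), htr, hrt]; linarith
        · rw [hts, htr, hrs]; split_ifs <;> linarith
      · rcases z with _ | (i'' | j'')
        · rw [htr, htt i i' (fun h => hxy (by rw [h])), htr]; linarith
        · rw [htt i i'' (fun h => hxz (by rw [h])), htt i i' (fun h => hxy (by rw [h])),
            htt i' i'' (fun h => hyz (by rw [h]))]; linarith
        · rw [hts, htt i i' (fun h => hxy (by rw [h])), hts]; split_ifs <;> linarith
      · rcases z with _ | (i'' | j'')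
        · rw [htr, hts, hsr]; split_ifs <;> linarith
        · rw [htt i i'' (fun h => hxz (by rw [h])), hts, hst]; split_ifs <;> linarith
        · rw [hts, hts, hss j' j'' (fun h => hyz (by rw [h]))]; split_ifs <;> linarith
    · rcases y with _ | (i' | j')
      · rcases z with _ | (i'' | j'')
        · exact absurd rfl hyz
        · rw [hst, hsr, hrt]; split_ifs <;> linarith
        · rw [hss j j'' (fun h => hxz (by rw [h])), hsr, hrs]; split_ifs <;> linarith
      · rcases z with _ | (i'' | j'')
        · rw [hsr, hst, htr]; split_ifs <;> linarith
        · rw [hst, hst, htt i' i'' (fun h => hyz (by rw [h]))]; split_ifs <;> linarith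
        · rw [hss j j'' (fun h => hxz (by rw [h])), hst, hts]; split_ifs <;> linarith
      · rcases z with _ | (i'' | j'')
        · rw [hsr, hss j j' (fun h => hxy (by rw [h])), hsr]; split_ifs <;> linarith
        · rw [hst, hss j j' (fun h => hxy (by rw [h])), hst]; split_ifs <;> linarith
        · rw [hss j j'' (fun h => hxz (by rw [h])), hss j j' (fun h => hxy (by rw [h])),
            hss j' j'' (fun h => hyz (by rw [h]))]
          split_ifs <;> exact (h5 _ (by simp) _ (by simp) _ (by simp)).2.1
  refine ⟨?_, ?_, hsymm, tri⟩
  · intro x y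
    by_cases h : x = y
    · subst h; exact (hself x).ge
    · exact (hpos x y h).le
  · intro x y
    constructor
    · intro h
      by_contra hne
      exact (hpos x y hne).ne' h
    · rintro rfl; exact hself x
end

section
/- Let p ≥ 1 be finite real and 0 < θ ≤ 1/2 satisfy 3·((1-θ)^p + 2θ^p)^{1/p} + 3^{1/p}·θ < 3. Then the tuple (α_X, α_P, β_in, β_out, γ_0, γ_1, γ_2, τ) = (3^{1/p}θ, 1, ((1-θ)^p + 2θ^p)^{1/p}, (1 + 3θ^p)^{1/p}, 6^{1/p}θ, 4^{1/p}θ, 2^{1/p}θ, 2^{1/p}) satisfies: (P1) α_X ≤ min(3γ_2/2, α_P, β_in, β_out, γ_0, γ_1, τ); (P2) α_P ≤ β_out; (P3) β_in + α_X/3 < min(α_P, τ); (P4) min(α_P, τ) ≤ β_in + γ_2. -/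
/-- For finite `p ≥ 1` and `0 < θ ≤ 1/2` with
`3·((1-θ)^p + 2θ^p)^(1/p) + 3^(1/p)·θ < 3`, the tuple
`(α_X, α_P, β_in, β_out, γ_0, γ_1, γ_2, τ)
  = (3^(1/p)θ, 1, ((1-θ)^p+2θ^p)^(1/p), (1+3θ^p)^(1/p), 6^(1/p)θ, 4^(1/p)θ, 2^(1/p)θ, 2^(1/p))`
satisfies the Steiner embeddability conditions (P1)–(P4). -/
theorem stmt13 (p θ : ℝ) (hp : 1 ≤ p) (hθ : 0 < θ) (hθ2 : θ ≤ 1 / 2)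
    (hkey : 3 * ((1 - θ) ^ p + 2 * θ ^ p) ^ (1 / p) + (3 : ℝ) ^ (1 / p) * θ < 3) :
    ((3 : ℝ) ^ (1 / p) * θ ≤ 3 * ((2 : ℝ) ^ (1 / p) * θ) / 2 ∧
      (3 : ℝ) ^ (1 / p) * θ ≤ 1 ∧
      (3 : ℝ) ^ (1 / p) * θ ≤ ((1 - θ) ^ p + 2 * θ ^ p) ^ (1 / p) ∧
      (3 : ℝ) ^ (1 / p) * θ ≤ (1 + 3 * θ ^ p) ^ (1 / p) ∧
      (3 : ℝ) ^ (1 / p) * θ ≤ (6 : ℝ) ^ (1 / p) * θ ∧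
      (3 : ℝ) ^ (1 / p) * θ ≤ (4 : ℝ) ^ (1 / p) * θ ∧
      (3 : ℝ) ^ (1 / p) * θ ≤ (2 : ℝ) ^ (1 / p)) ∧
    (1 : ℝ) ≤ (1 + 3 * θ ^ p) ^ (1 / p) ∧
    ((1 - θ) ^ p + 2 * θ ^ p) ^ (1 / p) + (3 : ℝ) ^ (1 / p) * θ / 3
      < min 1 ((2 : ℝ) ^ (1 / p)) ∧
    min (1 : ℝ) ((2 : ℝ) ^ (1 / p))
      ≤ ((1 - θ) ^ p + 2 * θ ^ p) ^ (1 / p) + (2 : ℝ) ^ (1 / p) * θ := by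
  have hp0 : (0:ℝ) < p := lt_of_lt_of_le one_pos hp
  have hip : (0:ℝ) ≤ 1 / p := by positivity
  have hip1 : (1:ℝ) / p ≤ 1 := by
    rw [div_le_one hp0]; exact hp
  have h1θ : (0:ℝ) ≤ 1 - θ := by linarith
  have hcancel : ∀ x : ℝ, 0 ≤ x → (x ^ p) ^ (1 / p) = x := by
    intro x hx
    rw [← Real.rpow_mul hx, mul_one_div, div_self hp0.ne', Real.rpow_one]
  have hθpn : (0:ℝ) ≤ θ ^ p := Real.rpow_nonneg hθ.le p
  have hA : (3:ℝ) ^ (1 / p) * θ = (3 * θ ^ p) ^ (1 / p) := by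
    rw [Real.mul_rpow (by norm_num) hθpn, hcancel θ hθ.le]
  have h2A : (2:ℝ) ^ (1 / p) * θ = (2 * θ ^ p) ^ (1 / p) := by
    rw [Real.mul_rpow (by norm_num) hθpn, hcancel θ hθ.le]
  have hθle : θ ^ p ≤ (1 - θ) ^ p := Real.rpow_le_rpow hθ.le (by linarith) hp0.le
  have hAB : (3:ℝ) ^ (1 / p) * θ ≤ ((1 - θ) ^ p + 2 * θ ^ p) ^ (1 / p) := by
    rw [hA]
    exact Real.rpow_le_rpow (by positivity) (by linarith) hip
  have hA34 : (3:ℝ) ^ (1 / p) * θ < 3 / 4 := by linarith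
  have h2one : (1:ℝ) ≤ (2:ℝ) ^ (1 / p) := Real.one_le_rpow (by norm_num) hip
  have hBge : (1:ℝ) - θ ≤ ((1 - θ) ^ p + 2 * θ ^ p) ^ (1 / p) := by
    calc (1:ℝ) - θ = ((1 - θ) ^ p) ^ (1 / p) := (hcancel _ h1θ).symm
      _ ≤ ((1 - θ) ^ p + 2 * θ ^ p) ^ (1 / p) :=
        Real.rpow_le_rpow (by positivity) (by linarith) hip
  refine ⟨⟨?_, by linarith, hAB, ?_, ?_, ?_, by linarith⟩, ?_, ?_, ?_⟩
  · have h32 : ((3:ℝ)/2) ^ (1/p) ≤ 3/2 := by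
      calc ((3:ℝ)/2) ^ (1/p) ≤ ((3:ℝ)/2) ^ (1:ℝ) :=
        Real.rpow_le_rpow_of_exponent_le (by norm_num) hip1
      _ = 3/2 := Real.rpow_one _
    have h3eq : (3:ℝ) ^ (1/p) = ((3:ℝ)/2) ^ (1/p) * (2:ℝ) ^ (1/p) := by
      rw [← Real.mul_rpow (by norm_num) (by norm_num)]; norm_num
    have h2p : (0:ℝ) ≤ (2:ℝ) ^ (1/p) := Real.rpow_nonneg (by norm_num) _
    nlinarith [mul_le_mul_of_nonneg_right h32 h2p]
  · rw [hA]
    exact Real.rpow_le_rpow (by positivity) (by linarith) hip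
  · have := Real.rpow_le_rpow (by norm_num : (0:ℝ) ≤ 3) (by norm_num : (3:ℝ) ≤ 6) hip
    nlinarith
  · have := Real.rpow_le_rpow (by norm_num : (0:ℝ) ≤ 3) (by norm_num : (3:ℝ) ≤ 4) hip
    nlinarith
  · exact Real.one_le_rpow (by linarith) hip
  · rw [min_eq_left h2one]; linarith
  · rw [min_eq_left h2one]
    have : θ ≤ (2:ℝ) ^ (1/p) * θ := by nlinarith
    linarith
end
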